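/- arXiv:2108.00125 — 6 statements merged into one kernel-verified Lean document; each statement's English description precedes it below -/
import Mathlib

section
/- If x ∈ ℝ^n is a Pareto stationary point, then d_ω(x) = 0 and β_ω(x) = 0. -/
open Filter Topology
open scoped RealInnerProductSpace

noncomputable section

/-- `Euc n` is Euclidean `n`-space `ℝ^n`. -/
abbrev Euc (n : ℕ) := EuclideanSpace ℝ (Fin n)

/-- `HasDirDeriv f x d D` : the one-sided directional derivative of `f` at `x`
in direction `d` exists and equals `D`, i.e. `(f (x + α • d) - f x)/α → D` as `α → 0⁺`. -/
def HasDirDeriv {n : ℕ} (f : Euc n → ℝ) (x d : Euc n) (D : ℝ) : Prop :=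
  Filter.Tendsto (fun α : ℝ => (f (x + α • d) - f x) / α)
    (nhdsWithin 0 (Set.Ioi 0)) (nhds D)

/-- `x` is Pareto stationary for the objectives `F i`:
for every direction `d`, `max_i F_i'(x; d) ≥ 0`, i.e. some objective has
nonnegative directional derivative in direction `d`. -/
def ParetoStationary {n m : ℕ} (F : Fin m → Euc n → ℝ) (x : Euc n) : Prop :=
  ∀ d : Euc n, ∃ i : Fin m, ∃ D : ℝ, HasDirDeriv (F i) x d D ∧ 0 ≤ D

/-- `θ_x(d) = max_i { ⟪∇g_i(x), d⟫ + ½⟪d, B_i(x) d⟫ + h_i(x+d) - h_i(x) }`. -/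
def theta {n m : ℕ} (g h : Fin m → Euc n → ℝ)
    (B : Fin m → Euc n → (Euc n →L[ℝ] Euc n)) (x d : Euc n) : ℝ :=
  ⨆ i : Fin m, (⟪gradient (g i) x, d⟫ + (1 / 2) * ⟪d, B i x d⟫ + h i (x + d) - h i x)

/-- `φ_{ω,x}(d) = θ_x(d) + (ω/2)‖d‖²`. -/
def phi {n m : ℕ} (g h : Fin m → Euc n → ℝ)
    (B : Fin m → Euc n → (Euc n →L[ℝ] Euc n)) (ω : ℝ) (x d : Euc n) : ℝ :=
  theta g h B x d + (ω / 2) * ‖d‖ ^ 2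

/-!
Comparing `φ_{ω,x}` at its minimizer `d = d_ω(x)` with its value `0` at `d = 0` gives
`φ_{ω,x}(d) ≤ 0`. Pareto stationarity gives an index `i` with `0 ≤ F_i'(x; d)`, and by convexity
of `h_i` along the segment `[x, x + d]`, `F_i'(x; d) ≤ ⟪∇g_i(x), d⟫ + h_i(x + d) - h_i(x)`. Since
`B_i(x)` is positive semidefinite, the `i`-th term of `θ_x(d)` is nonnegative, so
`(ω/2)‖d‖² ≤ φ_{ω,x}(d) ≤ 0`, whence `d = 0` and `β_ω(x) = φ_{ω,x}(0) = 0`.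
-/

theorem ConvexOn.slope_le_sub {E : Type*} [AddCommGroup E] [Module ℝ E] {f : E → ℝ}
    (hf : ConvexOn ℝ Set.univ f) (x d : E) {α : ℝ} (hα₀ : 0 < α) (hα₁ : α ≤ 1) :
    (f (x + α • d) - f x) / α ≤ f (x + d) - f x := by
  have hconv : f (x + α • d) ≤ (1 - α) * f x + α * f (x + d) := by
    have := hf.2 (Set.mem_univ x) (Set.mem_univ (x + d)) (show 0 ≤ 1 - α by linarith) hα₀.le
      (sub_add_cancel 1 α)
    rwa [show (1 - α) • x + α • (x + d) = x + α • d by module] at this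
  rw [div_le_iff₀ hα₀]
  nlinarith

namespace HasDirDeriv

variable {n : ℕ} {f g : Euc n → ℝ} {x d : Euc n} {D D' : ℝ}

theorem le_sub_of_convexOn (hD : HasDirDeriv f x d D) (hf : ConvexOn ℝ Set.univ f) :
    D ≤ f (x + d) - f x := by
  refine le_of_tendsto hD ?_
  filter_upwards [Ioo_mem_nhdsGT (zero_lt_one' ℝ)] with α hα
  exact hf.slope_le_sub x d hα.1 hα.2.le

theorem sub (hf : HasDirDeriv f x d D) (hg : HasDirDeriv g x d D') :
    HasDirDeriv (fun y => f y - g y) x d (D - D') :=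
  (Tendsto.sub hf hg).congr fun α => by ring

end HasDirDeriv

theorem DifferentiableAt.hasDirDeriv {n : ℕ} {f : Euc n → ℝ} {x : Euc n}
    (hf : DifferentiableAt ℝ f x) (d : Euc n) : HasDirDeriv f x d ⟪gradient f x, d⟫ := by
  have hline := hf.hasGradientAt.hasFDerivAt.hasLineDerivAt d
  simp only [InnerProductSpace.toDual_apply_apply] at hline
  exact hline.tendsto_slope_zero_right.congr fun α => by rw [smul_eq_mul, inv_mul_eq_div]

theorem HasDirDeriv.le_inner_gradient_add_sub {n : ℕ} {g h : Euc n → ℝ} {x d : Euc n} {D : ℝ}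
    (hD : HasDirDeriv (fun y => g y + h y) x d D) (hg : DifferentiableAt ℝ g x)
    (hh : ConvexOn ℝ Set.univ h) :
    D ≤ ⟪gradient g x, d⟫ + (h (x + d) - h x) := by
  have hhD : HasDirDeriv h x d (D - ⟪gradient g x, d⟫) :=
    (hD.sub (hg.hasDirDeriv d)).congr fun α => by simp only [add_sub_cancel_left]
  linarith [hhD.le_sub_of_convexOn hh]

section Subproblem

variable {n m : ℕ} (g h : Fin m → Euc n → ℝ) (B : Fin m → Euc n → (Euc n →L[ℝ] Euc n))

theorem theta_zero (x : Euc n) : theta g h B x 0 = 0 := by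
  simp [theta, Real.iSup_const_zero]

theorem phi_zero (ω : ℝ) (x : Euc n) : phi g h B ω x 0 = 0 := by
  simp [phi, theta_zero]

theorem le_theta (x d : Euc n) (i : Fin m) :
    ⟪gradient (g i) x, d⟫ + (1 / 2) * ⟪d, B i x d⟫ + h i (x + d) - h i x ≤ theta g h B x d :=
  le_ciSup (f := fun i => ⟪gradient (g i) x, d⟫ + (1 / 2) * ⟪d, B i x d⟫ + h i (x + d) - h i x)
    (Set.finite_range _).bddAbove i

variable {g h B}

theorem theta_nonneg_of_paretoStationary {x : Euc n} (d : Euc n)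
    (hg : ∀ i, DifferentiableAt ℝ (g i) x) (hh : ∀ i, ConvexOn ℝ Set.univ (h i))
    (hB : ∀ i, 0 ≤ ⟪d, B i x d⟫) (hx : ParetoStationary (fun i y => g i y + h i y) x) :
    0 ≤ theta g h B x d := by
  obtain ⟨i, D, hD, hD₀⟩ := hx d
  have hslope := hD.le_inner_gradient_add_sub (hg i) (hh i)
  linarith [le_theta g h B x d i, hB i]

theorem eq_zero_of_phi_nonpos {ω : ℝ} (hω : 0 < ω) {x d : Euc n}
    (hθ : 0 ≤ theta g h B x d) (hφ : phi g h B ω x d ≤ 0) : d = 0 := by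
  have hsq : ‖d‖ ^ 2 ≤ 0 := by
    unfold phi at hφ
    nlinarith
  exact norm_eq_zero.mp (pow_eq_zero_iff two_ne_zero |>.mp (le_antisymm hsq (sq_nonneg _)))

end Subproblem

theorem pareto_stationary_imp_direction_zero_general
    {n m : ℕ} (g h : Fin m → Euc n → ℝ)
    (B : Fin m → Euc n → (Euc n →L[ℝ] Euc n))
    (hg : ∀ i, ContDiff ℝ 2 (g i))
    (hh : ∀ i, ConvexOn ℝ Set.univ (h i))
    (hBpos : ∀ i x (d : Euc n), d ≠ 0 → 0 < ⟪d, B i x d⟫)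
    (ω : ℝ) (hω : 0 < ω)
    (dω : Euc n → Euc n)
    (hmin : ∀ y d, phi g h B ω y (dω y) ≤ phi g h B ω y d)
    (x : Euc n)
    (hx : ParetoStationary (fun i y => g i y + h i y) x) :
    dω x = 0 ∧ phi g h B ω x (dω x) = 0 := by
  have hB : ∀ i, 0 ≤ ⟪dω x, B i x (dω x)⟫ := fun i =>
    (eq_or_ne (dω x) 0).elim (fun h₀ => by simp [h₀]) fun h₀ => (hBpos i x _ h₀).le
  have hθ := theta_nonneg_of_paretoStationary (dω x)
    (fun i => ((hg i).differentiable two_ne_zero).differentiableAt) hh hB hx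
  have hφ : phi g h B ω x (dω x) ≤ 0 := phi_zero g h B ω x ▸ hmin x 0
  have hd : dω x = 0 := eq_zero_of_phi_nonpos hω hθ hφ
  exact ⟨hd, hd ▸ phi_zero g h B ω x⟩

/-- if x is Pareto stationary then d_ω(x) = 0 and β_ω(x) = 0. -/
theorem pareto_stationary_imp_direction_zero
    {n m : ℕ} (g h : Fin m → Euc n → ℝ)
    (B : Fin m → Euc n → (Euc n →L[ℝ] Euc n))
    (hm : 0 < m)
    (hg : ∀ i, ContDiff ℝ 2 (g i))
    (hsc : ∀ i, ∃ a : ℝ, 0 < a ∧ ∀ x y : Euc n,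
      a * ‖x - y‖ ^ 2 ≤ ⟪gradient (g i) x - gradient (g i) y, x - y⟫)
    (hh : ∀ i, ConvexOn ℝ Set.univ (h i))
    (hBsymm : ∀ i x (u v : Euc n), ⟪B i x u, v⟫ = ⟪u, B i x v⟫)
    (hBpos : ∀ i x (d : Euc n), d ≠ 0 → 0 < ⟪d, B i x d⟫)
    (ω : ℝ) (hω : 0 < ω)
    (dω : Euc n → Euc n)
    (hmin : ∀ y d, phi g h B ω y (dω y) ≤ phi g h B ω y d)
    (x : Euc n)
    (hx : ParetoStationary (fun i y => g i y + h i y) x) :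
    dω x = 0 ∧ phi g h B ω x (dω x) = 0 :=
  pareto_stationary_imp_direction_zero_general g h B hg hh hBpos ω hω dω hmin x hx
end
end

section
/- If, for each i = 1,…,m, the matrix-valued map x ↦ B_i(x) is continuous on ℝ^n with symmetric positive definite values, then the solution map d_ω : ℝ^n → ℝ^n, assigning to x the unique minimizer of φ_{ω,x}, is continuous. -/
/-!
The map `d ↦ φ_{ω,x}(d)` is `ω`-strongly convex (a finite maximum of convex models plus
`(ω/2)‖d‖²`), and `(x, d) ↦ φ_{ω,x}(d)` is jointly continuous. Strong convexity makes `φ_{ω,x}`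
exceed its minimum by `ω r² / 4` on the sphere of radius `r` around `d_ω(x)`. For `y` near `x`,
`φ_{ω,y}` is uniformly within `ω r² / 8` of `φ_{ω,x}` on that ball, so `φ_{ω,y}` is larger on the
sphere than at its centre; by convexity of `φ_{ω,y}` its minimizer `d_ω(y)` lies in the ball.
-/

open Filter Topology
open scoped RealInnerProductSpace

noncomputable section

open Set

section FiniteSupremum

variable {ι : Type*} [Finite ι]

lemma Real.convexOn_iSup {E : Type*} [AddCommGroup E] [Module ℝ E] {s : Set E}
    {f : ι → E → ℝ} (hs : Convex ℝ s) (hf : ∀ i, ConvexOn ℝ s (f i)) :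
    ConvexOn ℝ s fun x => ⨆ i, f i x := by
  cases isEmpty_or_nonempty ι
  · simpa [Real.iSup_of_isEmpty] using convexOn_const (0 : ℝ) hs
  refine ⟨hs, fun x hx y hy a b ha hb hab => ciSup_le fun i => ?_⟩
  dsimp only
  calc f i (a • x + b • y) ≤ a • f i x + b • f i y := (hf i).2 hx hy ha hb hab
    _ ≤ a • (⨆ j, f j x) + b • ⨆ j, f j y := by
      gcongr
      · exact le_ciSup (Set.finite_range fun j => f j x).bddAbove i
      · exact le_ciSup (Set.finite_range fun j => f j y).bddAbove i

lemma Real.continuous_iSup {X : Type*} [TopologicalSpace X] {f : ι → X → ℝ}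
    (hf : ∀ i, Continuous (f i)) : Continuous fun x => ⨆ i, f i x := by
  cases isEmpty_or_nonempty ι
  · simpa [Real.iSup_of_isEmpty] using continuous_const
  have := Fintype.ofFinite ι
  simp_rw [← Finset.sup'_univ_eq_ciSup]
  exact Continuous.finset_sup'_apply _ fun i _ => hf i

end FiniteSupremum

lemma LinearMap.convexOn_inner_self_apply {E : Type*} [NormedAddCommGroup E]
    [InnerProductSpace ℝ E] (T : E →ₗ[ℝ] E) (hT : ∀ v : E, 0 ≤ ⟪v, T v⟫) :
    ConvexOn ℝ univ fun v : E => ⟪v, T v⟫ := by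
  refine ⟨convex_univ, fun x _ y _ a b ha hb hab => ?_⟩
  have hcombo : ⟪a • x + b • y, T (a • x + b • y)⟫
      = a * ⟪x, T x⟫ + b * ⟪y, T y⟫ - a * b * ⟪x - y, T (x - y)⟫ := by
    obtain rfl := eq_sub_of_add_eq hab
    simp only [map_add, map_sub, map_smul, inner_add_left, inner_add_right, inner_sub_left,
      inner_sub_right, real_inner_smul_left, real_inner_smul_right]
    ring
  simp only [hcombo, smul_eq_mul]
  nlinarith [hT (x - y), mul_nonneg ha hb]

lemma StrongConvexOn.mul_sq_norm_sub_le_of_isMinOn {E : Type*} [NormedAddCommGroup E]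
    [NormedSpace ℝ E] {s : Set E} {m : ℝ} {f : E → ℝ} {u d : E} (hf : StrongConvexOn s m f)
    (hu : u ∈ s) (hmin : IsMinOn f s u) (hd : d ∈ s) :
    m / 4 * ‖d - u‖ ^ 2 ≤ f d - f u := by
  have hhalf : (0 : ℝ) ≤ 1 / 2 := by norm_num
  have hmid := hf.2 hd hu hhalf hhalf (by norm_num)
  have hle : f u ≤ f ((1 / 2 : ℝ) • d + (1 / 2 : ℝ) • u) :=
    hmin (hf.1 hd hu hhalf hhalf (by norm_num))
  simp only [smul_eq_mul] at hmid
  linarith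

theorem continuousAt_of_strongConvexOn_of_isMinOn {X E : Type*} [TopologicalSpace X]
    [NormedAddCommGroup E] [NormedSpace ℝ E] [ProperSpace E] {F : X → E → ℝ} {m : ℝ}
    (hm : 0 < m) (hF : Continuous (Function.uncurry F))
    (hconv : ∀ y, StrongConvexOn univ m (F y)) {u : X → E} (hu : ∀ y, IsMinOn (F y) univ (u y))
    (x : X) : ContinuousAt u x := by
  rw [ContinuousAt, Metric.tendsto_nhds]
  intro ε hε
  set r := ε / 2 with hr
  set δ := m / 4 * r ^ 2 / 2 with hδ
  have hδpos : 0 < δ := by positivity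
  have hclose : ∀ᶠ y in 𝓝 x, ∀ d ∈ Metric.closedBall (u x) r, |F y d - F x d| < δ := by
    refine (isCompact_closedBall _ _).eventually_forall_of_forall_eventually fun d _ => ?_
    have hcont : Continuous fun p : X × E => |F p.1 p.2 - F x p.2| :=
      (hF.sub (hF.comp (continuous_const.prodMk continuous_snd))).abs
    exact hcont.continuousAt.eventually_lt continuousAt_const (by simpa using hδpos)
  filter_upwards [hclose] with y hy
  rw [dist_eq_norm]
  by_contra! hfar
  have hpos : 0 < ‖u y - u x‖ := by linarith
  set t := r / ‖u y - u x‖ with ht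
  have ht0 : 0 ≤ t := by positivity
  have ht1 : t ≤ 1 := by rw [ht, div_le_one hpos]; linarith
  set z := (1 - t) • u x + t • u y with hz
  have hzdist : ‖z - u x‖ = r := by
    have : z - u x = t • (u y - u x) := by rw [hz]; module
    rw [this, norm_smul, Real.norm_of_nonneg ht0, ht, div_mul_cancel₀ _ hpos.ne']
  have hFz : F y z ≤ F y (u x) :=
    ((((hconv y).strictConvexOn hm).convexOn.le_on_segment' (mem_univ _) (mem_univ _)
      (by linarith) ht0 (by ring)).trans (max_le le_rfl (hu y (mem_univ _))))
  have hgrow := (hconv x).mul_sq_norm_sub_le_of_isMinOn (mem_univ _) (hu x) (mem_univ z)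
  rw [hzdist] at hgrow
  have hz_near := abs_lt.mp (hy z (by rw [Metric.mem_closedBall, dist_eq_norm, hzdist]))
  have hux_near := abs_lt.mp (hy (u x) (Metric.mem_closedBall_self (by positivity)))
  linarith [hz_near.1, hux_near.2]

lemma ContDiff.continuous_gradient {E : Type*} [NormedAddCommGroup E] [InnerProductSpace ℝ E]
    [CompleteSpace E] {f : E → ℝ} (hf : ContDiff ℝ 1 f) : Continuous (gradient f) :=
  (InnerProductSpace.toDual ℝ E).symm.continuous.comp (hf.continuous_fderiv one_ne_zero)

section Subproblem

variable {n m : ℕ} {g h : Fin m → Euc n → ℝ} {B : Fin m → Euc n → (Euc n →L[ℝ] Euc n)}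

lemma convexOn_theta (hh : ∀ i, ConvexOn ℝ univ (h i)) (hB : ∀ i x (d : Euc n), 0 ≤ ⟪d, B i x d⟫)
    (x : Euc n) : ConvexOn ℝ univ (theta g h B x) := by
  refine Real.convexOn_iSup convex_univ fun i => ?_
  have hlin := (innerₛₗ ℝ (gradient (g i) x)).convexOn convex_univ
  have hquad := ((B i x : Euc n →ₗ[ℝ] Euc n).convexOn_inner_self_apply (hB i x)).smul
    (by norm_num : (0 : ℝ) ≤ 1 / 2)
  have hshift := (hh i).translate_right x
  refine (((hlin.add hquad).add hshift).add_const (-h i x)).congr fun d _ => ?_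
  simp [sub_eq_add_neg]

lemma continuous_theta (hg : ∀ i, ContDiff ℝ 1 (g i)) (hh : ∀ i, ConvexOn ℝ univ (h i))
    (hB : ∀ i, Continuous (B i)) :
    Continuous fun p : Euc n × Euc n => theta g h B p.1 p.2 := by
  refine Real.continuous_iSup fun i => ?_
  have hhc : Continuous (h i) := continuousOn_univ.mp ((hh i).continuousOn isOpen_univ)
  have hgc := (hg i).continuous_gradient
  fun_prop

lemma strongConvexOn_phi (hh : ∀ i, ConvexOn ℝ univ (h i))
    (hB : ∀ i x (d : Euc n), 0 ≤ ⟪d, B i x d⟫) (ω : ℝ) (x : Euc n) :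
    StrongConvexOn univ ω (phi g h B ω x) :=
  strongConvexOn_iff_convex.mpr <| (convexOn_theta (g := g) hh hB x).congr fun d _ => by simp [phi]

end Subproblem

theorem d_omega_continuous_general
    {n m : ℕ} (g h : Fin m → Euc n → ℝ)
    (B : Fin m → Euc n → (Euc n →L[ℝ] Euc n))
    (hg : ∀ i, ContDiff ℝ 2 (g i))
    (hh : ∀ i, ConvexOn ℝ Set.univ (h i))
    (hBpos : ∀ i x (d : Euc n), d ≠ 0 → 0 < ⟪d, B i x d⟫)
    (hBcont : ∀ i, Continuous (fun x => B i x))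
    (ω : ℝ) (hω : 0 < ω)
    (dω : Euc n → Euc n)
    (hmin : ∀ y d, phi g h B ω y (dω y) ≤ phi g h B ω y d) :
    Continuous dω := by
  have hBnonneg : ∀ i x (d : Euc n), 0 ≤ ⟪d, B i x d⟫ := fun i x d => by
    rcases eq_or_ne d 0 with rfl | hd
    · simp
    · exact (hBpos i x d hd).le
  have hphi : Continuous (Function.uncurry (phi g h B ω)) :=
    (continuous_theta (fun i => (hg i).of_le one_le_two) hh hBcont).add (by fun_prop)
  exact continuous_iff_continuousAt.mpr <| continuousAt_of_strongConvexOn_of_isMinOn hω hphi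
    (strongConvexOn_phi hh hBnonneg ω) fun y d _ => hmin y d

/-- continuity of the solution map d_ω. -/
theorem d_omega_continuous
    {n m : ℕ} (g h : Fin m → Euc n → ℝ)
    (B : Fin m → Euc n → (Euc n →L[ℝ] Euc n))
    (hm : 0 < m)
    (hg : ∀ i, ContDiff ℝ 2 (g i))
    (hsc : ∀ i, ∃ a : ℝ, 0 < a ∧ ∀ x y : Euc n,
      a * ‖x - y‖ ^ 2 ≤ ⟪gradient (g i) x - gradient (g i) y, x - y⟫)
    (hh : ∀ i, ConvexOn ℝ Set.univ (h i))
    (hBsymm : ∀ i x (u v : Euc n), ⟪B i x u, v⟫ = ⟪u, B i x v⟫)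
    (hBpos : ∀ i x (d : Euc n), d ≠ 0 → 0 < ⟪d, B i x d⟫)
    (hBcont : ∀ i, Continuous (fun x => B i x))
    (ω : ℝ) (hω : 0 < ω)
    (dω : Euc n → Euc n)
    (hmin : ∀ y d, phi g h B ω y (dω y) ≤ phi g h B ω y d)
    (huniq : ∀ y d, (∀ d', phi g h B ω y d ≤ phi g h B ω y d') → d = dω y) :
    Continuous dω :=
  d_omega_continuous_general g h B hg hh hBpos hBcont ω hω dω hmin
end
end

section
/- For every x ∈ ℝ^n, the minimizer d_ω(x) of φ_{ω,x} satisfies θ_x(d_ω(x)) ≤ −ω‖d_ω(x)‖². -/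
open Filter Topology
open scoped RealInnerProductSpace

noncomputable section

lemma theta_smul_le {n m : ℕ} (g h : Fin m → Euc n → ℝ)
    (B : Fin m → Euc n → (Euc n →L[ℝ] Euc n))
    (hm : 0 < m)
    (hh : ∀ i, ConvexOn ℝ Set.univ (h i))
    (hBpos : ∀ i x (d : Euc n), d ≠ 0 → 0 < ⟪d, B i x d⟫)
    (x d : Euc n) {t : ℝ} (ht0 : 0 ≤ t) (ht1 : t ≤ 1) :
    theta g h B x (t • d) ≤ t * theta g h B x d := by
  haveI : Nonempty (Fin m) := ⟨⟨0, hm⟩⟩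
  unfold theta
  apply ciSup_le
  intro i
  have hq : 0 ≤ ⟪d, B i x d⟫ := by
    rcases eq_or_ne d 0 with rfl | hd
    · simp
    · exact (hBpos i x d hd).le
  have hconv : h i (x + t • d) ≤ t * h i (x + d) + (1 - t) * h i x := by
    have := (hh i).2 (Set.mem_univ (x + d)) (Set.mem_univ x)
      (show (0:ℝ) ≤ t from ht0) (show (0:ℝ) ≤ 1 - t by linarith)
      (show t + (1 - t) = 1 by ring)
    have hpt : t • (x + d) + (1 - t) • x = x + t • d := by
      module
    rw [hpt] at this
    simpa [smul_eq_mul] using this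
  have hB : B i x (t • d) = t • B i x d := by
    simp [map_smul]
  have key : ⟪gradient (g i) x, t • d⟫ + 1/2 * ⟪t • d, B i x (t • d)⟫
      + h i (x + t • d) - h i x
      ≤ t * (⟪gradient (g i) x, d⟫ + 1/2 * ⟪d, B i x d⟫ + h i (x + d) - h i x) := by
    rw [hB, real_inner_smul_right, real_inner_smul_left, real_inner_smul_right]
    nlinarith [hconv, mul_nonneg (mul_nonneg ht0 (sub_nonneg.2 ht1)) hq]
  refine key.trans (mul_le_mul_of_nonneg_left ?_ ht0)
  exact le_ciSup (Finite.bddAbove_range fun j =>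
    (⟪gradient (g j) x, d⟫ + 1/2 * ⟪d, B j x d⟫ + h j (x + d) - h j x)) i


/-- θ_x(d_ω(x)) ≤ −ω‖d_ω(x)‖² for every x. -/
theorem theta_le_neg_omega_norm_sq
    {n m : ℕ} (g h : Fin m → Euc n → ℝ)
    (B : Fin m → Euc n → (Euc n →L[ℝ] Euc n))
    (hm : 0 < m)
    (hg : ∀ i, ContDiff ℝ 2 (g i))
    (hsc : ∀ i, ∃ a : ℝ, 0 < a ∧ ∀ x y : Euc n,
      a * ‖x - y‖ ^ 2 ≤ ⟪gradient (g i) x - gradient (g i) y, x - y⟫)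
    (hh : ∀ i, ConvexOn ℝ Set.univ (h i))
    (hBsymm : ∀ i x (u v : Euc n), ⟪B i x u, v⟫ = ⟪u, B i x v⟫)
    (hBpos : ∀ i x (d : Euc n), d ≠ 0 → 0 < ⟪d, B i x d⟫)
    (ω : ℝ) (hω : 0 < ω)
    (dω : Euc n → Euc n)
    (hmin : ∀ y d, phi g h B ω y (dω y) ≤ phi g h B ω y d) :
    ∀ x : Euc n, theta g h B x (dω x) ≤ -ω * ‖dω x‖ ^ 2 := by
  intro x
  haveI : Nonempty (Fin m) := ⟨⟨0, hm⟩⟩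
  set d := dω x with hd_def
  rcases eq_or_ne d 0 with hd | hd
  · rw [hd]
    simp only [theta, norm_zero]
    have : ∀ i : Fin m, ⟪gradient (g i) x, (0:Euc n)⟫
        + (1/2) * ⟪(0:Euc n), B i x 0⟫ + h i (x + 0) - h i x = 0 := by
      intro i; simp
    rw [iSup_congr this]
    simp
  · have hN : 0 < ‖d‖ ^ 2 := pow_pos (norm_pos_iff.mpr hd) 2
    apply le_of_forall_pos_le_add
    intro ε hε
    set s : ℝ := min 1 (2 * ε / (ω * ‖d‖ ^ 2)) with hs_def
    have hs0 : 0 < s := lt_min one_pos (div_pos (by positivity) (mul_pos hω hN))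
    have hs1 : s ≤ 1 := min_le_left _ _
    have hsε : s * ((ω / 2) * ‖d‖ ^ 2) ≤ ε := by
      have h1 : s ≤ 2 * ε / (ω * ‖d‖ ^ 2) := min_le_right _ _
      have h2 := (le_div_iff₀ (mul_pos hω hN)).1 h1
      nlinarith [h2]
    have hkey := hmin x ((1 - s) • d)
    rw [← hd_def] at hkey
    unfold phi at hkey
    have hsm : theta g h B x ((1 - s) • d) ≤ (1 - s) * theta g h B x d :=
      theta_smul_le g h B hm hh hBpos x d (by linarith) (by linarith)
    have hnorm : ‖(1 - s) • d‖ ^ 2 = (1 - s) ^ 2 * ‖d‖ ^ 2 := by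
      rw [norm_smul, mul_pow, Real.norm_eq_abs, sq_abs]
    rw [hnorm] at hkey
    have h2 : s * theta g h B x d ≤ s * (-ω * ‖d‖ ^ 2 + (ω / 2) * s * ‖d‖ ^ 2) := by
      nlinarith [hkey, hsm]
    have h3 : theta g h B x d ≤ -ω * ‖d‖ ^ 2 + (ω / 2) * s * ‖d‖ ^ 2 :=
      le_of_mul_le_mul_left h2 hs0
    nlinarith [h3, hsε]
end
end

section
/- Let τ ∈ (0,1) and ω > 0. Let {x^k} ⊂ ℝ^n, set d^k := d_ω(x^k), let λ_k ∈ (0,1], and suppose that x^{k+1} = x^k + λ_k d^k and that the Armijo condition F_i(x^k + λ_k d^k) ≤ F_i(x^k) + λ_k τ θ_{x^k}(d^k) holds for all i = 1,…,m and all k. If {F_i(x^k)}_k is bounded from below for every i, then the series ∑_{k=0}^∞ λ_k ‖d^k‖² converges. -/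
open Filter Topology
open scoped RealInnerProductSpace

noncomputable section

/-- under the Armijo condition, ∑ λ_k ‖d^k‖² converges. -/
theorem armijo_summable
    {n m : ℕ} (g h : Fin m → Euc n → ℝ)
    (B : Fin m → Euc n → (Euc n →L[ℝ] Euc n))
    (hm : 0 < m)
    (hg : ∀ i, ContDiff ℝ 2 (g i))
    (hsc : ∀ i, ∃ a : ℝ, 0 < a ∧ ∀ x y : Euc n,
      a * ‖x - y‖ ^ 2 ≤ ⟪gradient (g i) x - gradient (g i) y, x - y⟫)
    (hh : ∀ i, ConvexOn ℝ Set.univ (h i))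
    (hBsymm : ∀ i x (u v : Euc n), ⟪B i x u, v⟫ = ⟪u, B i x v⟫)
    (hBpos : ∀ i x (d : Euc n), d ≠ 0 → 0 < ⟪d, B i x d⟫)
    (ω : ℝ) (hω : 0 < ω)
    (dω : Euc n → Euc n)
    (hmin : ∀ y d, phi g h B ω y (dω y) ≤ phi g h B ω y d)
    (τ : ℝ) (hτ : τ ∈ Set.Ioo (0 : ℝ) 1)
    (x : ℕ → Euc n) (lam : ℕ → ℝ)
    (hlam : ∀ k, lam k ∈ Set.Ioc (0 : ℝ) 1)
    (hstep : ∀ k, x (k + 1) = x k + lam k • dω (x k))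
    (harm : ∀ k i,
      g i (x k + lam k • dω (x k)) + h i (x k + lam k • dω (x k))
        ≤ g i (x k) + h i (x k) + lam k * τ * theta g h B (x k) (dω (x k)))
    (hbdd : ∀ i, ∃ C : ℝ, ∀ k, C ≤ g i (x k) + h i (x k)) :
    Summable (fun k => lam k * ‖dω (x k)‖ ^ 2) := by
  have hne : Nonempty (Fin m) := ⟨⟨0, hm⟩⟩
  obtain ⟨i⟩ := hne
  have hne : Nonempty (Fin m) := ⟨i⟩
  obtain ⟨C, hC⟩ := hbdd i
  set F := fun k => g i (x k) + h i (x k) with hF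
  clear_value F
  have hθ0 : ∀ y, theta g h B y 0 = 0 := by
    intro y
    simp [theta, ciSup_const]
  have hθ : ∀ y, theta g h B y (dω y) ≤ -(ω/2) * ‖dω y‖^2 := by
    intro y
    have h1 := hmin y 0
    rw [phi, phi, hθ0 y] at h1
    simp only [norm_zero] at h1
    nlinarith [h1]
  have hτ0 := hτ.1
  have hτω : (0:ℝ) < τ * ω := mul_pos hτ0 hω
  have key : ∀ k, lam k * ‖dω (x k)‖^2 ≤ (2/(τ*ω)) * (F k - F (k+1)) := by
    intro k
    have hA := harm k i
    have hθk := hθ (x k)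
    have hlk := (hlam k).1
    have h2 : lam k * τ * theta g h B (x k) (dω (x k))
        ≤ lam k * τ * (-(ω/2) * ‖dω (x k)‖^2) :=
      mul_le_mul_of_nonneg_left hθk (by positivity)
    have hFk1 : F (k+1) = g i (x k + lam k • dω (x k)) + h i (x k + lam k • dω (x k)) := by
      simp [hF, hstep k]
    have h3 : F (k+1) ≤ F k + lam k * τ * (-(ω/2) * ‖dω (x k)‖^2) := by
      rw [hFk1, hF]; exact le_trans hA (by linarith)
    rw [div_mul_eq_mul_div, le_div_iff₀ hτω]
    have h4 : lam k * ‖dω (x k)‖^2 * (τ*ω)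
        = -2*(lam k * τ * (-(ω/2)*‖dω (x k)‖^2)) := by ring
    linarith
  have hnonneg : ∀ k, 0 ≤ lam k * ‖dω (x k)‖^2 := fun k => by
    have := (hlam k).1; positivity
  apply summable_of_sum_range_le (c := (2/(τ*ω)) * (F 0 - C)) hnonneg
  intro N
  calc ∑ k ∈ Finset.range N, lam k * ‖dω (x k)‖^2
      ≤ ∑ k ∈ Finset.range N, (2/(τ*ω)) * (F k - F (k+1)) :=
        Finset.sum_le_sum fun k _ => key k
    _ = (2/(τ*ω)) * (F 0 - F N) := by
        rw [← Finset.mul_sum, Finset.sum_range_sub']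
    _ ≤ (2/(τ*ω)) * (F 0 - C) := by
        have h2 : (0:ℝ) ≤ 2/(τ*ω) := by positivity
        have h5 : C ≤ F N := by rw [hF]; exact hC N
        nlinarith
end
end

section
/- Let τ ∈ (0,1) and ω > 0. Let {x^k} ⊂ ℝ^n, set d^k := d_ω(x^k), let λ_k ∈ (0,1], and suppose that x^{k+1} = x^k + λ_k d^k and that the Armijo condition F_i(x^k + λ_k d^k) ≤ F_i(x^k) + λ_k τ θ_{x^k}(d^k) holds for all i = 1,…,m and all k. If {F_i(x^k)}_k is bounded from below for every i, then lim_{k→∞} λ_k ‖d^k‖² = 0. -/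
open Filter Topology
open scoped RealInnerProductSpace

noncomputable section

/-- under the Armijo condition, λ_k ‖d^k‖² → 0. -/
theorem armijo_tendsto_zero
    {n m : ℕ} (g h : Fin m → Euc n → ℝ)
    (B : Fin m → Euc n → (Euc n →L[ℝ] Euc n))
    (hm : 0 < m)
    (hg : ∀ i, ContDiff ℝ 2 (g i))
    (hsc : ∀ i, ∃ a : ℝ, 0 < a ∧ ∀ x y : Euc n,
      a * ‖x - y‖ ^ 2 ≤ ⟪gradient (g i) x - gradient (g i) y, x - y⟫)
    (hh : ∀ i, ConvexOn ℝ Set.univ (h i))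
    (hBsymm : ∀ i x (u v : Euc n), ⟪B i x u, v⟫ = ⟪u, B i x v⟫)
    (hBpos : ∀ i x (d : Euc n), d ≠ 0 → 0 < ⟪d, B i x d⟫)
    (ω : ℝ) (hω : 0 < ω)
    (dω : Euc n → Euc n)
    (hmin : ∀ y d, phi g h B ω y (dω y) ≤ phi g h B ω y d)
    (τ : ℝ) (hτ : τ ∈ Set.Ioo (0 : ℝ) 1)
    (x : ℕ → Euc n) (lam : ℕ → ℝ)
    (hlam : ∀ k, lam k ∈ Set.Ioc (0 : ℝ) 1)
    (hstep : ∀ k, x (k + 1) = x k + lam k • dω (x k))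
    (harm : ∀ k i,
      g i (x k + lam k • dω (x k)) + h i (x k + lam k • dω (x k))
        ≤ g i (x k) + h i (x k) + lam k * τ * theta g h B (x k) (dω (x k)))
    (hbdd : ∀ i, ∃ C : ℝ, ∀ k, C ≤ g i (x k) + h i (x k)) :
    Filter.Tendsto (fun k => lam k * ‖dω (x k)‖ ^ 2) atTop (nhds 0) := by
  obtain ⟨hτ0, hτ1⟩ := hτ
  have : Nonempty (Fin m) := ⟨⟨0, hm⟩⟩
  set i0 : Fin m := ⟨0, hm⟩
  -- θ_y(0) = 0
  have hθ0 : ∀ y : Euc n, theta g h B y 0 = 0 := by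
    intro y
    have : ∀ i : Fin m,
        (⟪gradient (g i) y, (0:Euc n)⟫ + (1 / 2) * ⟪(0:Euc n), B i y 0⟫ + h i (y + 0) - h i y)
        = 0 := by
      intro i; simp
    simp only [theta, this, ciSup_const]
  -- θ_{x}(d_ω x) ≤ -(ω/2)‖d_ω x‖²
  have hθle : ∀ y : Euc n,
      theta g h B y (dω y) ≤ -(ω / 2) * ‖dω y‖ ^ 2 := by
    intro y
    have h1 := hmin y 0
    simp only [phi, hθ0 y, norm_zero] at h1
    nlinarith [h1]
  set F : ℕ → ℝ := fun k => g i0 (x k) + h i0 (x k) with hF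
  have hFk : ∀ k, F k = g i0 (x k) + h i0 (x k) := fun _ => rfl
  set a : ℕ → ℝ := fun k => lam k * ‖dω (x k)‖ ^ 2 with ha
  have ha0 : ∀ k, 0 ≤ a k := fun k =>
    mul_nonneg (le_of_lt (hlam k).1) (by positivity)
  set c : ℝ := τ * (ω / 2) with hc
  have hc0 : 0 < c := by positivity
  have key : ∀ k, c * a k ≤ F k - F (k + 1) := by
    intro k
    have h1 := harm k i0
    have h2 := hθle (x k)
    have h3 : lam k * τ * theta g h B (x k) (dω (x k))
        ≤ lam k * τ * (-(ω / 2) * ‖dω (x k)‖ ^ 2) := by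
      apply mul_le_mul_of_nonneg_left h2
      exact mul_nonneg (le_of_lt (hlam k).1) (le_of_lt hτ0)
    have h4 : F (k + 1) = g i0 (x k + lam k • dω (x k)) + h i0 (x k + lam k • dω (x k)) := by
      simp [hF, hstep k]
    rw [h4]
    have : c * a k = -(lam k * τ * (-(ω / 2) * ‖dω (x k)‖ ^ 2)) := by ring
    linarith [h1, h3, hFk k]
  obtain ⟨C, hC⟩ := hbdd i0
  have hsum : ∀ K : ℕ, ∑ j ∈ Finset.range K, c * a j ≤ F 0 - C := by
    intro K
    calc ∑ j ∈ Finset.range K, c * a j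
        ≤ ∑ j ∈ Finset.range K, (F j - F (j + 1)) :=
          Finset.sum_le_sum fun j _ => key j
      _ = F 0 - F K := Finset.sum_range_sub' F K
      _ ≤ F 0 - C := by linarith [hC K, hFk K]
  have hSummable : Summable (fun k => c * a k) :=
    summable_of_sum_range_le (fun k => mul_nonneg hc0.le (ha0 k)) hsum
  have htend : Tendsto (fun k => c * a k) atTop (nhds 0) :=
    hSummable.tendsto_atTop_zero
  have := htend.const_mul c⁻¹
  simp only [mul_zero] at this
  have heq : (fun k => c⁻¹ * (c * a k)) = a := by
    funext k; field_simp
  rwa [heq] at this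
end
end

section
/- If x ∈ ℝ^n is a Pareto stationary point and each F_i is strictly convex (which holds in particular since each g_i is strongly convex and each h_i is convex), then x is a Pareto optimal point, i.e. there is no y ∈ ℝ^n with F_i(y) ≤ F_i(x) for all i = 1,…,m and F_j(y) < F_j(x) for at least one j. -/
open Filter Topology
open scoped RealInnerProductSpace

noncomputable section

/-- (strictly convex objectives) a Pareto stationary point is Pareto optimal. -/
theorem stationary_imp_pareto_optimal
    {n m : ℕ} (g h : Fin m → Euc n → ℝ)
    (hm : 0 < m)
    (hg : ∀ i, ContDiff ℝ 2 (g i))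
    (hsc : ∀ i, ∃ a : ℝ, 0 < a ∧ ∀ x y : Euc n,
      a * ‖x - y‖ ^ 2 ≤ ⟪gradient (g i) x - gradient (g i) y, x - y⟫)
    (hh : ∀ i, ConvexOn ℝ Set.univ (h i))
    (hstrict : ∀ i, StrictConvexOn ℝ Set.univ (fun y => g i y + h i y))
    (x : Euc n)
    (hx : ParetoStationary (fun i y => g i y + h i y) x) :
    ¬ ∃ y : Euc n, (∀ i, g i y + h i y ≤ g i x + h i x) ∧
      (∃ j, g j y + h j y < g j x + h j x) := by
  rintro ⟨y, hle, j, hj⟩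
  have hxy : x ≠ y := by rintro rfl; exact absurd hj (lt_irrefl _)
  obtain ⟨i, D, hD, hD0⟩ := hx (y - x)
  obtain ⟨F, hF⟩ : ∃ F : Euc n → ℝ, F = fun z => g i z + h i z := ⟨_, rfl⟩
  obtain ⟨L, hLdef⟩ : ∃ L : ℝ →ᵃ[ℝ] Euc n, L = AffineMap.lineMap x y := ⟨_, rfl⟩
  have hDF : HasDirDeriv F x (y - x) D := by rw [hF]; exact hD
  have hLα : ∀ α : ℝ, L α = x + α • (y - x) := by
    intro α; simp [hLdef, AffineMap.lineMap_apply, add_comm]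
  have hφconv : ConvexOn ℝ Set.univ (F ∘ L) := by
    rw [hF, hLdef]
    have := ((hstrict i).convexOn).comp_affineMap (AffineMap.lineMap x y : ℝ →ᵃ[ℝ] Euc n)
    simpa using this
  have hhalf : F (L (1/2 : ℝ)) < (1/2) * F x + (1/2) * F y := by
    have h2 := (hstrict i).2 (Set.mem_univ x) (Set.mem_univ y) hxy
      (by norm_num : (0:ℝ) < 1/2) (by norm_num : (0:ℝ) < 1/2) (by norm_num)
    have heq : L (1/2 : ℝ) = (1/2 : ℝ) • x + (1/2 : ℝ) • y := by
      rw [hLα]; module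
    rw [heq, hF]
    simpa [smul_eq_mul] using h2
  have hFy : F y ≤ F x := by rw [hF]; exact hle i
  have h3 : (1/2) * F x + (1/2) * F y ≤ F x := by linarith
  have hnum := sub_neg.2 (lt_of_lt_of_le hhalf h3)
  have hqneg := div_neg_of_neg_of_pos hnum (by norm_num : (0:ℝ) < (1/2:ℝ) - 0)
  have hL0 : L (0:ℝ) = x := by rw [hLα]; simp
  have hev : ∀ᶠ α in nhdsWithin (0:ℝ) (Set.Ioi 0),
      (F (x + α • (y - x)) - F x) / α ≤ (F (L (1/2:ℝ)) - F x) / ((1/2:ℝ) - 0) := by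
    filter_upwards [Ioo_mem_nhdsGT_of_mem
      (by norm_num : (0:ℝ) ∈ Set.Ico 0 (1/2))] with α hα
    have hs := hφconv.secant_mono (Set.mem_univ (0:ℝ)) (Set.mem_univ α)
      (Set.mem_univ (1/2:ℝ)) (ne_of_gt hα.1) (by norm_num) (le_of_lt hα.2)
    rw [hF]
    simpa [Function.comp, hL0, hLα α, sub_zero, hF] using hs
  have hDle := le_of_tendsto hDF hev
  exact absurd (lt_of_le_of_lt (hD0.trans hDle) hqneg) (lt_irrefl 0)
end
end
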